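/- arXiv:2104.10639 — 4 statements merged into one kernel-verified Lean document; each statement's English description precedes it below -/
import Mathlib

section
/- Let n, m be integers with 1 < m < n, let c > 0 and 1 < r < n be reals, and suppose s satisfies s ≥ 1 - n/(r*(n-1)) and s < 1. Then r*c*(m+1)/n - c + (n-m-1)*c/((n-1)*(1-s)) ≥ r*c - c > 0. -/
theorem stmt_5 (n m : ℤ) (c r s : ℝ)
    (hm1 : 1 < m) (hmn : m < n) (hc : 0 < c) (hr1 : 1 < r) (hrn : r < n)
    (hs : s ≥ 1 - (n : ℝ) / (r * ((n : ℝ) - 1))) (hs1 : s < 1) :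
    r * c * ((m : ℝ) + 1) / n - c + ((n : ℝ) - m - 1) * c / (((n : ℝ) - 1) * (1 - s)) ≥ r * c - c
      ∧ r * c - c > 0 := by
  have hmn' : (m : ℝ) < (n : ℝ) := by exact_mod_cast hmn
  have hm1' : (1 : ℝ) < (m : ℝ) := by exact_mod_cast hm1
  have hmn1 : (m : ℝ) ≤ (n : ℝ) - 1 := by
    have : m + 1 ≤ n := by omega
    have := (by exact_mod_cast this : (m:ℝ)+1 ≤ (n:ℝ))
    push_cast at this; linarith
  have hn2 : (2 : ℝ) < (n : ℝ) := by linarith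
  have hn0 : (0 : ℝ) < n := by linarith
  have hn1 : (0 : ℝ) < (n : ℝ) - 1 := by linarith
  have hr0 : (0 : ℝ) < r := by linarith
  have hs0 : (0 : ℝ) < 1 - s := by linarith
  have hden : (0 : ℝ) < ((n : ℝ) - 1) * (1 - s) := by positivity
  have hkey : ((n : ℝ) - 1) * (1 - s) * r ≤ n := by
    have h1 : 1 - s ≤ (n : ℝ) / (r * ((n : ℝ) - 1)) := by linarith
    have h2 : (1 - s) * (r * ((n : ℝ) - 1)) ≤ (n : ℝ) := by
      rw [← le_div_iff₀ (by positivity)]; exact h1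
    nlinarith
  have hnum : (0 : ℝ) ≤ ((n : ℝ) - m - 1) * c := by nlinarith
  have h3 : ((n : ℝ) - m - 1) * c * r / n ≤ ((n : ℝ) - m - 1) * c / (((n : ℝ) - 1) * (1 - s)) := by
    rw [div_le_div_iff₀ hn0 hden]
    nlinarith
  constructor
  · have heq : r * c * ((m : ℝ) + 1) / n + ((n : ℝ) - m - 1) * c * r / n = r * c := by
      field_simp; ring
    linarith
  · nlinarith
end

section
/- Let n, m be integers with 1 < m < n and let c > 0 be real. If -c + (n-m+1)*c/(n-1) ≥ 0, then m ≤ 2, hence m = 2; and in that case -c + (n-m+1)*c/(n-1) = 0. Consequently, there is no real l with 0 ≤ l ≤ min{-c + (n-m+1)*c/(n-1), r*c - c} satisfying at least one inequality strictly, for any r > 1. -/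
theorem stmt_6 (n m : ℤ) (c : ℝ)
    (hm1 : 1 < m) (hmn : m < n) (hc : 0 < c) :
    ((-c + ((n : ℝ) - m + 1) * c / ((n : ℝ) - 1) ≥ 0 →
        m = 2 ∧ -c + ((n : ℝ) - m + 1) * c / ((n : ℝ) - 1) = 0)) ∧
    (∀ r : ℝ, 1 < r →
      ¬ ∃ l : ℝ, 0 ≤ l ∧ l ≤ min (-c + ((n : ℝ) - m + 1) * c / ((n : ℝ) - 1)) (r * c - c) ∧
        (0 < l ∨ l < min (-c + ((n : ℝ) - m + 1) * c / ((n : ℝ) - 1)) (r * c - c))) := by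
  have hmn' : (m : ℝ) < (n : ℝ) := by exact_mod_cast hmn
  have hm1' : (1 : ℝ) < (m : ℝ) := by exact_mod_cast hm1
  have hn1 : (0 : ℝ) < (n : ℝ) - 1 := by linarith
  have key : -c + ((n : ℝ) - m + 1) * c / ((n : ℝ) - 1) ≥ 0 →
      m = 2 ∧ -c + ((n : ℝ) - m + 1) * c / ((n : ℝ) - 1) = 0 := by
    intro h
    have h2 : ((n : ℝ) - m + 1) * c / ((n : ℝ) - 1) ≥ c := by linarith
    have h3 : ((n : ℝ) - m + 1) * c ≥ c * ((n : ℝ) - 1) := by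
      rw [ge_iff_le, le_div_iff₀ hn1] at h2
      linarith
    have h4 : (m : ℝ) ≤ 2 := by nlinarith
    have hm2 : m = 2 := by
      have : m ≤ 2 := by exact_mod_cast h4
      omega
    refine ⟨hm2, ?_⟩
    subst hm2
    push_cast
    field_simp
    ring
  refine ⟨key, ?_⟩
  intro r hr ⟨l, hl0, hlmin, hstrict⟩
  have hA : 0 < -c + ((n : ℝ) - m + 1) * c / ((n : ℝ) - 1) := by
    rcases hstrict with h | h
    · exact lt_of_lt_of_le h (le_trans hlmin (min_le_left _ _))
    · exact lt_of_le_of_lt hl0 (lt_of_lt_of_le h (min_le_left _ _))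
  have := key (le_of_lt hA)
  linarith [this.2]
end

section
/- Let n, m be integers with 1 < m < n, let c > 0 be real. If (c/(m-1))*((n-m+1)/(n-1) - 1) ≥ 0, then m = 2, and in that case (c/(m-1))*((n-m+1)/(n-1) - 1) = 0. Consequently, there is no real l with 0 ≤ l ≤ min{(c/(m-1))*((n-m+1)/(n-1) - 1), b - c/n} satisfying at least one inequality strictly, for any reals b > c. -/
theorem stmt_11 (n m : ℤ) (c : ℝ)
    (hm1 : 1 < m) (hmn : m < n) (hc : 0 < c) :
    ((c / ((m : ℝ) - 1)) * (((n : ℝ) - m + 1) / ((n : ℝ) - 1) - 1) ≥ 0 →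
      m = 2 ∧ (c / ((m : ℝ) - 1)) * (((n : ℝ) - m + 1) / ((n : ℝ) - 1) - 1) = 0) ∧
    (∀ b : ℝ, b > c →
      ¬ ∃ l : ℝ, 0 ≤ l ∧
        l ≤ min ((c / ((m : ℝ) - 1)) * (((n : ℝ) - m + 1) / ((n : ℝ) - 1) - 1)) (b - c / n) ∧
        (0 < l ∨
          l < min ((c / ((m : ℝ) - 1)) * (((n : ℝ) - m + 1) / ((n : ℝ) - 1) - 1)) (b - c / n))) := by
  have hm1R : (1 : ℝ) < (m : ℝ) := by exact_mod_cast hm1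
  have hmnR : (m : ℝ) < (n : ℝ) := by exact_mod_cast hmn
  have hm0 : (0 : ℝ) < (m : ℝ) - 1 := by linarith
  have hn0 : (0 : ℝ) < (n : ℝ) - 1 := by linarith
  have hrw : ((n : ℝ) - m + 1) / ((n : ℝ) - 1) - 1 = (2 - (m : ℝ)) / ((n : ℝ) - 1) := by
    field_simp
    ring
  have hm2 : (2 : ℝ) ≤ (m : ℝ) := by exact_mod_cast hm1
  have hE : (c / ((m : ℝ) - 1)) * (((n : ℝ) - m + 1) / ((n : ℝ) - 1) - 1) ≤ 0 := by
    rw [hrw]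
    apply mul_nonpos_of_nonneg_of_nonpos
    · positivity
    · apply div_nonpos_of_nonpos_of_nonneg <;> linarith
  constructor
  · intro hge
    have hm2' : m = 2 := by
      by_contra h
      have h3 : (3 : ℝ) ≤ (m : ℝ) := by
        have : 3 ≤ m := by omega
        exact_mod_cast this
      have : (c / ((m : ℝ) - 1)) * (((n : ℝ) - m + 1) / ((n : ℝ) - 1) - 1) < 0 := by
        rw [hrw]
        apply mul_neg_of_pos_of_neg
        · positivity
        · apply div_neg_of_neg_of_pos <;> linarith
      linarith
    refine ⟨hm2', le_antisymm hE hge⟩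
  · intro b hb ⟨l, hl0, hlmin, hstrict⟩
    have hmin : min ((c / ((m : ℝ) - 1)) * (((n : ℝ) - m + 1) / ((n : ℝ) - 1) - 1)) (b - c / n) ≤ 0 :=
      le_trans (min_le_left _ _) hE
    rcases hstrict with h | h <;> linarith
end

section
/- Let n, m be integers with 1 < m < n and let b > c > 0, and suppose m increases toward n. Then the generous-slope lower bound 1 - c*n*(n-m+1)/((n-1)*((b*n - c)*(m-1) + c*n)) is strictly increasing in m (for m in the range 2 ≤ m ≤ n-1). -/
theorem stmt_16 (n : ℤ) (b c : ℝ) (hbc : b > c) (hc : 0 < c) :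
    ∀ m₁ m₂ : ℤ, 2 ≤ m₁ → m₁ < m₂ → m₂ ≤ n - 1 →
      1 - c * n * ((n : ℝ) - m₁ + 1) /
          (((n : ℝ) - 1) * ((b * n - c) * ((m₁ : ℝ) - 1) + c * n)) <
      1 - c * n * ((n : ℝ) - m₂ + 1) /
          (((n : ℝ) - 1) * ((b * n - c) * ((m₂ : ℝ) - 1) + c * n)) := by
  intro m₁ m₂ h1 h12 h2n
  have hn4 : (4:ℝ) ≤ n := by exact_mod_cast (by omega : (4:ℤ) ≤ n)
  have hm1 : (2:ℝ) ≤ m₁ := by exact_mod_cast h1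
  have hm12 : (m₁:ℝ) + 1 ≤ m₂ := by exact_mod_cast (by omega : m₁ + 1 ≤ m₂)
  have hmn : (m₂:ℝ) ≤ (n:ℝ) - 1 := by
    have : (m₂:ℝ) ≤ ((n:ℤ) - 1 : ℤ) := by exact_mod_cast h2n
    push_cast at this; linarith
  have hbn : 0 < b * n - c := by nlinarith
  have hd1 : 0 < ((n : ℝ) - 1) * ((b * n - c) * ((m₁ : ℝ) - 1) + c * n) := by
    apply mul_pos (by linarith)
    nlinarith
  have hd2 : 0 < ((n : ℝ) - 1) * ((b * n - c) * ((m₂ : ℝ) - 1) + c * n) := by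
    apply mul_pos (by linarith)
    nlinarith
  have key : c * n * ((n : ℝ) - m₂ + 1) /
      (((n : ℝ) - 1) * ((b * n - c) * ((m₂ : ℝ) - 1) + c * n)) <
      c * n * ((n : ℝ) - m₁ + 1) /
      (((n : ℝ) - 1) * ((b * n - c) * ((m₁ : ℝ) - 1) + c * n)) := by
    rw [div_lt_div_iff₀ hd2 hd1]
    have hkey : 0 < (c * n * ((n:ℝ) - 1)) * (((m₂:ℝ) - m₁) * ((b * n - c) * n + c * n)) := by
      apply mul_pos (mul_pos (mul_pos hc (by linarith : (0:ℝ) < (n:ℝ))) (by linarith : (0:ℝ) < (n:ℝ) - 1))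
      apply mul_pos (by linarith)
      nlinarith
    nlinarith [hkey]
  linarith
end
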